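/- arXiv:2212.07633 — 7 statements merged into one kernel-verified Lean document; each statement's English description precedes it below -/
import Mathlib

section
/- Let n, q ≥ 1 and let F : ℝⁿ → ℝⁿ, x_s ∈ ℝⁿ, V : ℝⁿ → ℝ and constants α₁, α₂, α₃ > 0 satisfy α₁‖x − x_s‖² ≤ V(x) ≤ α₂‖x − x_s‖² for all x ∈ ℝⁿ and V(F(x)) − V(x) ≤ −α₃‖x − x_s‖² for all x ∈ ℝⁿ. Let g : ℝⁿ → ℝ^q be M_g-Lipschitz and φ : ℝ^q → ℝ be M_y-Lipschitz, with M_g, M_y ≥ 0. Set μ := (2α₂/α₁)(1 − α₃/α₂). Then for every x ∈ ℝⁿ, |φ(g(F(x))) − φ(g(x_s))|² ≤ (μ · M_y² · M_g² / (2α₂)) · V(x). -/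
/-- Lemma 2 of the paper: the evaluation error between the objective at the
next state and at the steady state is controlled by the Lyapunov function. -/
theorem stmt_0 (n q : ℕ) (hn : 1 ≤ n) (hq : 1 ≤ q)
    (F : EuclideanSpace ℝ (Fin n) → EuclideanSpace ℝ (Fin n))
    (x_s : EuclideanSpace ℝ (Fin n))
    (V : EuclideanSpace ℝ (Fin n) → ℝ)
    (α₁ α₂ α₃ : ℝ) (hα₁ : 0 < α₁) (hα₂ : 0 < α₂) (hα₃ : 0 < α₃)
    (hV₁ : ∀ x, α₁ * ‖x - x_s‖ ^ 2 ≤ V x)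
    (hV₂ : ∀ x, V x ≤ α₂ * ‖x - x_s‖ ^ 2)
    (hVdec : ∀ x, V (F x) - V x ≤ -α₃ * ‖x - x_s‖ ^ 2)
    (g : EuclideanSpace ℝ (Fin n) → EuclideanSpace ℝ (Fin q))
    (φ : EuclideanSpace ℝ (Fin q) → ℝ)
    (M_g M_y : ℝ) (hMg : 0 ≤ M_g) (hMy : 0 ≤ M_y)
    (hg : ∀ a b, ‖g a - g b‖ ≤ M_g * ‖a - b‖)
    (hφ : ∀ a b, |φ a - φ b| ≤ M_y * ‖a - b‖)
    (μ : ℝ) (hμ : μ = (2 * α₂ / α₁) * (1 - α₃ / α₂))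
    (x : EuclideanSpace ℝ (Fin n)) :
    |φ (g (F x)) - φ (g x_s)| ^ 2 ≤ μ * M_y ^ 2 * M_g ^ 2 / (2 * α₂) * V x := by
  have h1 : |φ (g (F x)) - φ (g x_s)| ≤ M_y * (M_g * ‖F x - x_s‖) :=
    le_trans (hφ _ _) (by
      have := hg (F x) x_s
      nlinarith [norm_nonneg (g (F x) - g x_s)])
  have hnn : (0:ℝ) ≤ M_y * (M_g * ‖F x - x_s‖) :=
    mul_nonneg hMy (mul_nonneg hMg (norm_nonneg _))
  have h2 : |φ (g (F x)) - φ (g x_s)| ^ 2 ≤ M_y ^ 2 * M_g ^ 2 * ‖F x - x_s‖ ^ 2 := by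
    have := pow_le_pow_left₀ (abs_nonneg _) h1 2
    calc |φ (g (F x)) - φ (g x_s)| ^ 2 ≤ (M_y * (M_g * ‖F x - x_s‖)) ^ 2 := this
      _ = M_y ^ 2 * M_g ^ 2 * ‖F x - x_s‖ ^ 2 := by ring
  have h3 : α₁ * ‖F x - x_s‖ ^ 2 ≤ V (F x) := hV₁ (F x)
  have h4 : V (F x) ≤ (1 - α₃ / α₂) * V x := by
    have hd := hVdec x
    have hv2 := hV₂ x
    have : α₃ / α₂ * V x ≤ α₃ * ‖x - x_s‖ ^ 2 := by
      rw [div_mul_eq_mul_div, div_le_iff₀ hα₂]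
      nlinarith
    nlinarith
  have h5 : ‖F x - x_s‖ ^ 2 ≤ (1 - α₃ / α₂) * V x / α₁ := by
    rw [le_div_iff₀ hα₁]; nlinarith
  have hcoef : μ * M_y ^ 2 * M_g ^ 2 / (2 * α₂) = M_y ^ 2 * M_g ^ 2 * ((1 - α₃ / α₂) / α₁) := by
    rw [hμ]; field_simp
  rw [hcoef]
  calc |φ (g (F x)) - φ (g x_s)| ^ 2 ≤ M_y ^ 2 * M_g ^ 2 * ‖F x - x_s‖ ^ 2 := h2
    _ ≤ M_y ^ 2 * M_g ^ 2 * ((1 - α₃ / α₂) * V x / α₁) := by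
        apply mul_le_mul_of_nonneg_left _ (by positivity)
        exact h5.trans_eq (by ring)
    _ = M_y ^ 2 * M_g ^ 2 * ((1 - α₃ / α₂) / α₁) * V x := by ring
end

section
/- Let n, p ≥ 1. Let x_s : ℝᵖ → ℝⁿ be M_x-Lipschitz (M_x ≥ 0), let F : ℝⁿ × ℝᵖ → ℝⁿ and V : ℝⁿ × ℝᵖ → ℝ, and let α₁, α₂, α₃ > 0 satisfy, for all x ∈ ℝⁿ and θ ∈ ℝᵖ: α₁‖x − x_s(θ)‖² ≤ V(x, θ) ≤ α₂‖x − x_s(θ)‖² and V(F(x, θ), θ) − V(x, θ) ≤ −α₃‖x − x_s(θ)‖². Set μ := (2α₂/α₁)(1 − α₃/α₂). Let η, δ > 0, let φ', w, w' ∈ ℝᵖ with ‖w − w'‖ ≤ η‖φ'‖, let v, v' ∈ ℝᵖ with ‖v‖ = ‖v'‖ = 1, and set θ := w + δ·v and θ' := w' + δ·v'. Then for every x ∈ ℝⁿ, V(F(x, θ'), θ) ≤ μ · V(x, θ') + 4α₂η²M_x²‖φ'‖² + 16α₂δ²M_x². -/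
set_option maxHeartbeats 1000000 in
/-- Deterministic (pointwise) form of Lemma 3 of the paper. -/
theorem stmt_2 (n p : ℕ) (hn : 1 ≤ n) (hp : 1 ≤ p)
    (x_s : EuclideanSpace ℝ (Fin p) → EuclideanSpace ℝ (Fin n))
    (M_x : ℝ) (hMx : 0 ≤ M_x)
    (hxs : ∀ a b, ‖x_s a - x_s b‖ ≤ M_x * ‖a - b‖)
    (F : EuclideanSpace ℝ (Fin n) → EuclideanSpace ℝ (Fin p) → EuclideanSpace ℝ (Fin n))
    (V : EuclideanSpace ℝ (Fin n) → EuclideanSpace ℝ (Fin p) → ℝ)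
    (α₁ α₂ α₃ : ℝ) (hα₁ : 0 < α₁) (hα₂ : 0 < α₂) (hα₃ : 0 < α₃)
    (hV₁ : ∀ x θ, α₁ * ‖x - x_s θ‖ ^ 2 ≤ V x θ)
    (hV₂ : ∀ x θ, V x θ ≤ α₂ * ‖x - x_s θ‖ ^ 2)
    (hVdec : ∀ x θ, V (F x θ) θ - V x θ ≤ -α₃ * ‖x - x_s θ‖ ^ 2)
    (μ : ℝ) (hμ : μ = (2 * α₂ / α₁) * (1 - α₃ / α₂))
    (η δ : ℝ) (hη : 0 < η) (hδ : 0 < δ)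
    (φ' w w' : EuclideanSpace ℝ (Fin p)) (hww' : ‖w - w'‖ ≤ η * ‖φ'‖)
    (v v' : EuclideanSpace ℝ (Fin p)) (hv : ‖v‖ = 1) (hv' : ‖v'‖ = 1)
    (θ θ' : EuclideanSpace ℝ (Fin p)) (hθ : θ = w + δ • v) (hθ' : θ' = w' + δ • v')
    (x : EuclideanSpace ℝ (Fin n)) :
    V (F x θ') θ ≤ μ * V x θ' + 4 * α₂ * η ^ 2 * M_x ^ 2 * ‖φ'‖ ^ 2
      + 16 * α₂ * δ ^ 2 * M_x ^ 2 := by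

  have hVnn : 0 ≤ V x θ' := le_trans (by positivity) (hV₁ x θ')
  -- bound ‖F x θ' - x_s θ'‖²
  have h1 : α₁ * ‖F x θ' - x_s θ'‖ ^ 2 ≤ (1 - α₃ / α₂) * V x θ' := by
    have ha := hV₁ (F x θ') θ'
    have hb := hVdec x θ'
    have hc := hV₂ x θ'
    have hd : α₃ / α₂ * V x θ' ≤ α₃ * ‖x - x_s θ'‖ ^ 2 := by
      rw [div_mul_eq_mul_div, div_le_iff₀ hα₂]; nlinarith
    linarith
  have h1' : 2 * α₂ * ‖F x θ' - x_s θ'‖ ^ 2 ≤ μ * V x θ' := by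
    rw [hμ, div_mul_eq_mul_div, div_mul_eq_mul_div, le_div_iff₀ hα₁]
    nlinarith [mul_le_mul_of_nonneg_left h1 (by positivity : (0:ℝ) ≤ 2 * α₂)]
  -- bound ‖x_s θ' - x_s θ‖
  have h2 : ‖x_s θ' - x_s θ‖ ≤ M_x * (η * ‖φ'‖ + 2 * δ) := by
    have hd : ‖θ' - θ‖ ≤ η * ‖φ'‖ + 2 * δ := by
      have : θ' - θ = (w' - w) + (δ • v' - δ • v) := by rw [hθ, hθ']; abel
      rw [this]
      calc ‖(w' - w) + (δ • v' - δ • v)‖ ≤ ‖w' - w‖ + ‖δ • v' - δ • v‖ := norm_add_le _ _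
        _ ≤ ‖w' - w‖ + (‖δ • v'‖ + ‖δ • v‖) := by linarith [norm_sub_le (δ • v') (δ • v)]
        _ = ‖w - w'‖ + (|δ| * ‖v'‖ + |δ| * ‖v‖) := by rw [norm_sub_rev, norm_smul, norm_smul]; rfl
        _ ≤ η * ‖φ'‖ + 2 * δ := by rw [hv, hv', abs_of_pos hδ]; linarith
    calc ‖x_s θ' - x_s θ‖ ≤ M_x * ‖θ' - θ‖ := hxs θ' θ
      _ ≤ M_x * (η * ‖φ'‖ + 2 * δ) := by exact mul_le_mul_of_nonneg_left hd hMx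
  -- triangle + (a+b)² ≤ 2a²+2b²
  have key : V (F x θ') θ ≤ 2 * α₂ * ‖F x θ' - x_s θ'‖ ^ 2 + 2 * α₂ * ‖x_s θ' - x_s θ‖ ^ 2 := by
    have htri : ‖F x θ' - x_s θ‖ ≤ ‖F x θ' - x_s θ'‖ + ‖x_s θ' - x_s θ‖ :=
      norm_sub_le_norm_sub_add_norm_sub _ _ _
    have := hV₂ (F x θ') θ
    nlinarith [hα₂.le, mul_self_le_mul_self (norm_nonneg (F x θ' - x_s θ)) htri,
      sq_nonneg (‖F x θ' - x_s θ'‖ - ‖x_s θ' - x_s θ‖),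
      mul_le_mul_of_nonneg_left (mul_self_le_mul_self (norm_nonneg (F x θ' - x_s θ)) htri) hα₂.le]
  have h2' : 2 * α₂ * ‖x_s θ' - x_s θ‖ ^ 2 ≤
      4 * α₂ * η ^ 2 * M_x ^ 2 * ‖φ'‖ ^ 2 + 16 * α₂ * δ ^ 2 * M_x ^ 2 := by
    have hB2 : ‖x_s θ' - x_s θ‖ ^ 2 ≤ (M_x * (η * ‖φ'‖ + 2 * δ)) ^ 2 :=
      pow_le_pow_left₀ (norm_nonneg _) h2 2
    have hexp : (M_x * (η * ‖φ'‖ + 2 * δ)) ^ 2 ≤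
        2 * M_x ^ 2 * (η * ‖φ'‖) ^ 2 + 2 * M_x ^ 2 * (2 * δ) ^ 2 := by
      nlinarith [sq_nonneg (η * ‖φ'‖ - 2 * δ), sq_nonneg M_x,
        mul_nonneg (sq_nonneg M_x) (sq_nonneg (η * ‖φ'‖ - 2 * δ))]
    have hfin := mul_le_mul_of_nonneg_left (hB2.trans hexp) (by positivity : (0:ℝ) ≤ 2 * α₂)
    nlinarith [hfin]
  linarith
end

section
/- Let n, p ≥ 1. Let x_s : ℝᵖ → ℝⁿ be M_x-Lipschitz (M_x ≥ 0), let F : ℝⁿ × ℝᵖ → ℝⁿ and V : ℝⁿ × ℝᵖ → ℝ, and let α₁, α₂, α₃ > 0 satisfy, for all x ∈ ℝⁿ and θ ∈ ℝᵖ: α₁‖x − x_s(θ)‖² ≤ V(x, θ) ≤ α₂‖x − x_s(θ)‖² and V(F(x, θ), θ) − V(x, θ) ≤ −α₃‖x − x_s(θ)‖². Set μ := (2α₂/α₁)(1 − α₃/α₂). Then for all x ∈ ℝⁿ and θ, θ' ∈ ℝᵖ, V(F(x, θ'), θ) ≤ μ · V(x, θ') + 2α₂M_x²‖θ − θ'‖².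 -/
/-- The key recursive inequality established in the proof of Lemma 3 of the paper. -/
theorem stmt_3 (n p : ℕ) (hn : 1 ≤ n) (hp : 1 ≤ p)
    (x_s : EuclideanSpace ℝ (Fin p) → EuclideanSpace ℝ (Fin n))
    (M_x : ℝ) (hMx : 0 ≤ M_x)
    (hxs : ∀ a b, ‖x_s a - x_s b‖ ≤ M_x * ‖a - b‖)
    (F : EuclideanSpace ℝ (Fin n) → EuclideanSpace ℝ (Fin p) → EuclideanSpace ℝ (Fin n))
    (V : EuclideanSpace ℝ (Fin n) → EuclideanSpace ℝ (Fin p) → ℝ)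
    (α₁ α₂ α₃ : ℝ) (hα₁ : 0 < α₁) (hα₂ : 0 < α₂) (hα₃ : 0 < α₃)
    (hV₁ : ∀ x θ, α₁ * ‖x - x_s θ‖ ^ 2 ≤ V x θ)
    (hV₂ : ∀ x θ, V x θ ≤ α₂ * ‖x - x_s θ‖ ^ 2)
    (hVdec : ∀ x θ, V (F x θ) θ - V x θ ≤ -α₃ * ‖x - x_s θ‖ ^ 2)
    (μ : ℝ) (hμ : μ = (2 * α₂ / α₁) * (1 - α₃ / α₂))
    (x : EuclideanSpace ℝ (Fin n)) (θ θ' : EuclideanSpace ℝ (Fin p)) :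
    V (F x θ') θ ≤ μ * V x θ' + 2 * α₂ * M_x ^ 2 * ‖θ - θ'‖ ^ 2 := by
  have htri : ‖F x θ' - x_s θ‖ ≤ ‖F x θ' - x_s θ'‖ + ‖x_s θ' - x_s θ‖ := by
    have := norm_add_le (F x θ' - x_s θ') (x_s θ' - x_s θ)
    simpa [sub_add_sub_cancel] using this
  have hxsle : ‖x_s θ' - x_s θ‖ ≤ M_x * ‖θ - θ'‖ := by
    have := hxs θ' θ
    have hn : ‖θ' - θ‖ = ‖θ - θ'‖ := norm_sub_rev _ _
    linarith [this, mul_le_mul_of_nonneg_left (le_of_eq hn) hMx]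
  have h1 : V (F x θ') θ ≤ α₂ * ‖F x θ' - x_s θ‖ ^ 2 := hV₂ _ _
  have h2 : α₁ * ‖F x θ' - x_s θ'‖ ^ 2 ≤ V (F x θ') θ' := hV₁ _ _
  have h3 : V (F x θ') θ' - V x θ' ≤ -α₃ * ‖x - x_s θ'‖ ^ 2 := hVdec _ _
  have h4 : V x θ' ≤ α₂ * ‖x - x_s θ'‖ ^ 2 := hV₂ _ _
  have h5 : 0 ≤ V x θ' := le_trans (by positivity) (hV₁ x θ')
  have hsq : ‖F x θ' - x_s θ‖ ^ 2 ≤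
      2 * ‖F x θ' - x_s θ'‖ ^ 2 + 2 * (M_x * ‖θ - θ'‖) ^ 2 := by
    have h0 : (0:ℝ) ≤ ‖F x θ' - x_s θ‖ := norm_nonneg _
    have hb : ‖F x θ' - x_s θ‖ ≤ ‖F x θ' - x_s θ'‖ + M_x * ‖θ - θ'‖ :=
      le_trans htri (by linarith)
    nlinarith [norm_nonneg (F x θ' - x_s θ'), norm_nonneg (θ - θ'),
      sq_nonneg (‖F x θ' - x_s θ'‖ - M_x * ‖θ - θ'‖)]
  -- combine
  have hA : V (F x θ') θ ≤ 2 * α₂ * ‖F x θ' - x_s θ'‖ ^ 2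
      + 2 * α₂ * M_x ^ 2 * ‖θ - θ'‖ ^ 2 := by
    have := mul_le_mul_of_nonneg_left hsq hα₂.le
    nlinarith [this]
  have hB : ‖F x θ' - x_s θ'‖ ^ 2 ≤ (V x θ' - α₃ * ‖x - x_s θ'‖ ^ 2) / α₁ := by
    rw [le_div_iff₀ hα₁]
    nlinarith
  have hC : (2 * α₂) * ((V x θ' - α₃ * ‖x - x_s θ'‖ ^ 2) / α₁) ≤ μ * V x θ' := by
    rw [hμ]
    have e : (2 * α₂ / α₁) * (1 - α₃ / α₂) = (2 * (α₂ - α₃)) / α₁ := by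
      field_simp
    rw [e]
    have e1 : 2 * α₂ * ((V x θ' - α₃ * ‖x - x_s θ'‖ ^ 2) / α₁)
        = (2 * α₂ * (V x θ' - α₃ * ‖x - x_s θ'‖ ^ 2)) / α₁ := by ring
    have e2 : (2 * (α₂ - α₃)) / α₁ * V x θ' = (2 * (α₂ - α₃) * V x θ') / α₁ := by ring
    rw [e1, e2, div_le_div_iff₀ hα₁ hα₁]
    nlinarith [mul_le_mul_of_nonneg_left h4 (by positivity : (0:ℝ) ≤ 2 * α₃ * α₁)]
  calc V (F x θ') θ ≤ 2 * α₂ * ‖F x θ' - x_s θ'‖ ^ 2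
      + 2 * α₂ * M_x ^ 2 * ‖θ - θ'‖ ^ 2 := hA
    _ ≤ (2 * α₂) * ((V x θ' - α₃ * ‖x - x_s θ'‖ ^ 2) / α₁)
      + 2 * α₂ * M_x ^ 2 * ‖θ - θ'‖ ^ 2 := by
        have := mul_le_mul_of_nonneg_left hB (by positivity : (0:ℝ) ≤ 2 * α₂)
        linarith
    _ ≤ μ * V x θ' + 2 * α₂ * M_x ^ 2 * ‖θ - θ'‖ ^ 2 := by linarith
end

section
/- Let E be a real inner product space, r > 0, and define the radial projection onto the closed ball of radius r by Π(x) = x if ‖x‖ ≤ r and Π(x) = (r/‖x‖)·x otherwise. Let η, δ > 0, let w', φ ∈ E with ‖w'‖ ≤ r, let v, v' ∈ E with ‖v‖ = ‖v'‖ = 1, and set w := Π(w' − η·φ), θ := w + δ·v, θ' := w' + δ·v'. Then ‖θ − θ'‖² ≤ 2η²‖φ‖² + 8δ². -/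
open RealInnerProductSpace

/-- The radial projection onto the closed ball of radius `r` does not move
a point farther from any point `y` of the ball. -/
lemma proj_nonexp {E : Type*} [NormedAddCommGroup E] [InnerProductSpace ℝ E]
    (r : ℝ) (hr : 0 < r) (x y : E) (hy : ‖y‖ ≤ r) :
    ‖(if ‖x‖ ≤ r then x else (r / ‖x‖) • x) - y‖ ≤ ‖x - y‖ := by
  by_cases h : ‖x‖ ≤ r
  · simp [h]
  · simp only [h, if_false]
    push_neg at h
    have hx : 0 < ‖x‖ := lt_trans hr h
    set t : ℝ := r / ‖x‖ with ht
    have ht0 : 0 < t := div_pos hr hx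
    have ht1 : t < 1 := (div_lt_one hx).2 h
    have hip : ⟪x, y⟫ ≤ ‖x‖ * ‖y‖ := real_inner_le_norm x y
    have hsq : ‖t • x - y‖ ^ 2 ≤ ‖x - y‖ ^ 2 := by
      have h1 : ‖t • x - y‖ ^ 2 = t ^ 2 * ‖x‖ ^ 2 - 2 * t * ⟪x, y⟫ + ‖y‖ ^ 2 := by
        rw [norm_sub_sq_real, norm_smul, real_inner_smul_left, Real.norm_eq_abs,
          abs_of_pos ht0]
        ring
      have h2 : ‖x - y‖ ^ 2 = ‖x‖ ^ 2 - 2 * ⟪x, y⟫ + ‖y‖ ^ 2 := by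
        rw [norm_sub_sq_real]
      rw [h1, h2]
      have hyr : ‖x‖ * ‖y‖ ≤ ‖x‖ * r := by
        exact mul_le_mul_of_nonneg_left hy (le_of_lt hx)
      have htx : t * ‖x‖ = r := div_mul_cancel₀ r (ne_of_gt hx)
      nlinarith [sq_nonneg (‖x‖ - r), hip.trans hyr]
    nlinarith [norm_nonneg (t • x - y), norm_nonneg (x - y)]

/-- Bound on the squared increment of consecutive attack signals, from the
proof of Lemma 3 of the paper.  `proj` is the radial (metric) projection Π
onto the closed ball of radius `r`. -/
theorem stmt_4 {E : Type*} [NormedAddCommGroup E] [InnerProductSpace ℝ E]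
    (r : ℝ) (hr : 0 < r)
    (proj : E → E) (hproj : ∀ x, proj x = if ‖x‖ ≤ r then x else (r / ‖x‖) • x)
    (η δ : ℝ) (hη : 0 < η) (hδ : 0 < δ)
    (w' φ : E) (hw' : ‖w'‖ ≤ r)
    (v v' : E) (hv : ‖v‖ = 1) (hv' : ‖v'‖ = 1)
    (w θ θ' : E) (hw : w = proj (w' - η • φ))
    (hθ : θ = w + δ • v) (hθ' : θ' = w' + δ • v') :
    ‖θ - θ'‖ ^ 2 ≤ 2 * η ^ 2 * ‖φ‖ ^ 2 + 8 * δ ^ 2 := by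
  have hww : ‖w - w'‖ ≤ η * ‖φ‖ := by
    have := proj_nonexp r hr (w' - η • φ) w' hw'
    rw [hw, hproj]
    calc ‖(if ‖w' - η • φ‖ ≤ r then w' - η • φ else (r / ‖w' - η • φ‖) • (w' - η • φ)) - w'‖
        ≤ ‖(w' - η • φ) - w'‖ := this
      _ = η * ‖φ‖ := by
          rw [sub_sub_cancel_left, norm_neg, norm_smul, Real.norm_eq_abs,
            abs_of_pos hη]
  have htri : ‖θ - θ'‖ ≤ η * ‖φ‖ + 2 * δ := by
    have : θ - θ' = (w - w') + δ • (v - v') := by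
      rw [hθ, hθ', smul_sub]; abel
    rw [this]
    calc ‖(w - w') + δ • (v - v')‖ ≤ ‖w - w'‖ + ‖δ • (v - v')‖ := norm_add_le _ _
      _ ≤ η * ‖φ‖ + 2 * δ := by
          have : ‖δ • (v - v')‖ ≤ 2 * δ := by
            rw [norm_smul, Real.norm_eq_abs, abs_of_pos hδ]
            have : ‖v - v'‖ ≤ 2 := by
              calc ‖v - v'‖ ≤ ‖v‖ + ‖v'‖ := norm_sub_le _ _
                _ = 2 := by rw [hv, hv']; norm_num
            nlinarith
          linarith
  have h0 : (0:ℝ) ≤ ‖θ - θ'‖ := norm_nonneg _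
  nlinarith [sq_nonneg (η * ‖φ‖ - 2 * δ), mul_nonneg (mul_nonneg hη.le (norm_nonneg φ)) hδ.le]
end

section
/- Let E be a real inner product space and let p, M, η, δ > 0. Let Ψ : E → ℝ be M-Lipschitz. Let w, w', φ' ∈ E with ‖w − w'‖ ≤ η‖φ'‖, let u, u', v ∈ E with ‖u‖ = ‖u'‖ = ‖v‖ = 1, and set θ := w + δ·u, θ' := w' + δ·u'. Let e, e' ∈ ℝ and define the gradient estimate φ := (p/δ)·((Ψ(θ) + e) − (Ψ(θ') + e'))·v. Then ‖φ‖² ≤ (6η²p²M²/δ²)·‖φ'‖² + 24p²M² + (3p²/δ²)·(e² + e'²). -/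
/-- Deterministic (pointwise) form of Lemma 4 of the paper: bound on the
residual-feedback zeroth-order gradient estimate. -/
theorem stmt_6 {E : Type*} [NormedAddCommGroup E] [InnerProductSpace ℝ E]
    (p M η δ : ℝ) (hp : 0 < p) (hM : 0 < M) (hη : 0 < η) (hδ : 0 < δ)
    (Ψ : E → ℝ) (hΨ : ∀ a b, |Ψ a - Ψ b| ≤ M * ‖a - b‖)
    (w w' φ' : E) (hww' : ‖w - w'‖ ≤ η * ‖φ'‖)
    (u u' v : E) (hu : ‖u‖ = 1) (hu' : ‖u'‖ = 1) (hv : ‖v‖ = 1)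
    (θ θ' : E) (hθ : θ = w + δ • u) (hθ' : θ' = w' + δ • u')
    (e e' : ℝ)
    (φ : E) (hφ : φ = ((p / δ) * ((Ψ θ + e) - (Ψ θ' + e'))) • v) :
    ‖φ‖ ^ 2 ≤ (6 * η ^ 2 * p ^ 2 * M ^ 2 / δ ^ 2) * ‖φ'‖ ^ 2 + 24 * p ^ 2 * M ^ 2
      + (3 * p ^ 2 / δ ^ 2) * (e ^ 2 + e' ^ 2) := by
  have hdiff : θ - θ' = (w - w') + (δ • u - δ • u') := by
    rw [hθ, hθ']; abel
  have hnorm : ‖θ - θ'‖ ≤ η * ‖φ'‖ + 2 * δ := by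
    calc ‖θ - θ'‖ ≤ ‖w - w'‖ + ‖δ • u - δ • u'‖ := by rw [hdiff]; exact norm_add_le _ _
    _ ≤ ‖w - w'‖ + (‖δ • u‖ + ‖δ • u'‖) := by gcongr; exact norm_sub_le _ _
    _ ≤ η * ‖φ'‖ + 2 * δ := by
        rw [norm_smul, norm_smul, hu, hu', Real.norm_eq_abs, abs_of_pos hδ]
        linarith
  have hA : |Ψ θ - Ψ θ'| ≤ M * (η * ‖φ'‖ + 2 * δ) := by
    calc |Ψ θ - Ψ θ'| ≤ M * ‖θ - θ'‖ := hΨ θ θ'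
    _ ≤ M * (η * ‖φ'‖ + 2 * δ) := by gcongr
  have hφn : ‖φ‖ = |p / δ| * |(Ψ θ + e) - (Ψ θ' + e')| := by
    rw [hφ, norm_smul, hv, mul_one, Real.norm_eq_abs, abs_mul]
  have hA2 : (Ψ θ - Ψ θ') ^ 2 ≤ (M * (η * ‖φ'‖ + 2 * δ)) ^ 2 := by
    rw [← sq_abs]
    exact pow_le_pow_left₀ (abs_nonneg _) hA 2
  have hφ2 : ‖φ‖ ^ 2 = (p / δ) ^ 2 * ((Ψ θ + e) - (Ψ θ' + e')) ^ 2 := by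
    rw [hφn, mul_pow, sq_abs, sq_abs]
  rw [hφ2]
  have hδ2 : (0:ℝ) < δ ^ 2 := by positivity
  have hphnn : (0:ℝ) ≤ ‖φ'‖ := norm_nonneg _
  rw [div_pow]
  have key : ((Ψ θ + e) - (Ψ θ' + e')) ^ 2 ≤
      6 * M ^ 2 * η ^ 2 * ‖φ'‖ ^ 2 + 24 * M ^ 2 * δ ^ 2 + 3 * (e ^ 2 + e' ^ 2) := by
    nlinarith [hA2, sq_nonneg (M * (η * ‖φ'‖ - 2 * δ)),
      sq_nonneg (Ψ θ - Ψ θ' - e), sq_nonneg (Ψ θ - Ψ θ' + e'), sq_nonneg (e + e')]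
  have hp2 : (0:ℝ) < p ^ 2 / δ ^ 2 := by positivity
  calc p ^ 2 / δ ^ 2 * ((Ψ θ + e) - (Ψ θ' + e')) ^ 2
      ≤ p ^ 2 / δ ^ 2 * (6 * M ^ 2 * η ^ 2 * ‖φ'‖ ^ 2 + 24 * M ^ 2 * δ ^ 2 + 3 * (e ^ 2 + e' ^ 2)) := by
        exact mul_le_mul_of_nonneg_left key hp2.le
    _ = (6 * η ^ 2 * p ^ 2 * M ^ 2 / δ ^ 2) * ‖φ'‖ ^ 2 + 24 * p ^ 2 * M ^ 2
      + (3 * p ^ 2 / δ ^ 2) * (e ^ 2 + e' ^ 2) := by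
        field_simp
end

section
/- Let n, p ≥ 1, let D be a nonempty type (the noise space), and let c₁, c₂, c₃ > 0 and M_x ≥ 0. Let x_s : ℝᵖ × D → ℝⁿ be such that for every d ∈ D the map θ ↦ x_s(θ, d) is M_x-Lipschitz, and let F : ℝⁿ × ℝᵖ × D → ℝⁿ and V : ℝⁿ × ℝᵖ × D → ℝ satisfy, for all x ∈ ℝⁿ, θ ∈ ℝᵖ, d ∈ D: c₁‖x − x_s(θ, d)‖² ≤ V(x, θ, d) ≤ c₂‖x − x_s(θ, d)‖² and V(F(x, θ, d), θ, d) − V(x, θ, d) ≤ −c₃‖x − x_s(θ, d)‖². Set μ' := (2c₂/c₁)(1 − c₃/c₂). Then for all x ∈ ℝⁿ, θ, θ' ∈ ℝᵖ and d, d' ∈ D, V(F(x, θ', d'), θ, d) ≤ μ'·V(x, θ', d') + 4c₂M_x²‖θ − θ'‖² + 4c₂‖x_s(θ', d') − x_s(θ', d)‖². -/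
set_option maxHeartbeats 1000000 in
/-- Deterministic skeleton of Lemma 6 of the paper: Lyapunov recursion for the
system with internal noise. -/
theorem stmt_7 (n p : ℕ) (hn : 1 ≤ n) (hp : 1 ≤ p)
    {D : Type*} [Nonempty D]
    (c₁ c₂ c₃ : ℝ) (hc₁ : 0 < c₁) (hc₂ : 0 < c₂) (hc₃ : 0 < c₃)
    (M_x : ℝ) (hMx : 0 ≤ M_x)
    (x_s : EuclideanSpace ℝ (Fin p) → D → EuclideanSpace ℝ (Fin n))
    (hxs : ∀ d, ∀ a b, ‖x_s a d - x_s b d‖ ≤ M_x * ‖a - b‖)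
    (F : EuclideanSpace ℝ (Fin n) → EuclideanSpace ℝ (Fin p) → D → EuclideanSpace ℝ (Fin n))
    (V : EuclideanSpace ℝ (Fin n) → EuclideanSpace ℝ (Fin p) → D → ℝ)
    (hV₁ : ∀ x θ d, c₁ * ‖x - x_s θ d‖ ^ 2 ≤ V x θ d)
    (hV₂ : ∀ x θ d, V x θ d ≤ c₂ * ‖x - x_s θ d‖ ^ 2)
    (hVdec : ∀ x θ d, V (F x θ d) θ d - V x θ d ≤ -c₃ * ‖x - x_s θ d‖ ^ 2)
    (μ' : ℝ) (hμ' : μ' = (2 * c₂ / c₁) * (1 - c₃ / c₂))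
    (x : EuclideanSpace ℝ (Fin n)) (θ θ' : EuclideanSpace ℝ (Fin p)) (d d' : D) :
    V (F x θ' d') θ d ≤ μ' * V x θ' d' + 4 * c₂ * M_x ^ 2 * ‖θ - θ'‖ ^ 2
      + 4 * c₂ * ‖x_s θ' d' - x_s θ' d‖ ^ 2 := by
  have h0 := hV₁ (F x θ' d') θ' d'
  have h1 := hV₂ (F x θ' d') θ d
  have h2 := hV₂ x θ' d'
  have h3 := hVdec x θ' d'
  set a := ‖F x θ' d' - x_s θ' d'‖ with ha
  set b := ‖x_s θ' d' - x_s θ' d‖ with hb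
  set c := ‖x_s θ' d - x_s θ d‖ with hc
  have htri : ‖F x θ' d' - x_s θ d‖ ≤ a + b + c := by
    calc ‖F x θ' d' - x_s θ d‖ ≤ ‖F x θ' d' - x_s θ' d‖ + c := by
          simpa using norm_sub_le_norm_sub_add_norm_sub (F x θ' d') (x_s θ' d) (x_s θ d)
      _ ≤ a + b + c := by
          have := norm_sub_le_norm_sub_add_norm_sub (F x θ' d') (x_s θ' d') (x_s θ' d)
          linarith
  have hlip : c ≤ M_x * ‖θ - θ'‖ := by
    have := hxs d θ' θ
    rwa [norm_sub_rev θ' θ] at this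
  have ha0 : 0 ≤ a := norm_nonneg _
  have hb0 : 0 ≤ b := norm_nonneg _
  have hc0 : 0 ≤ c := norm_nonneg _
  have hn0 : 0 ≤ ‖F x θ' d' - x_s θ d‖ := norm_nonneg _
  have hsq : ‖F x θ' d' - x_s θ d‖ ^ 2 ≤ (a + b + c) ^ 2 := by
    have := pow_le_pow_left₀ hn0 htri 2
    simpa using this
  have hsum : (a + b + c) ^ 2 ≤ 2 * a ^ 2 + 4 * b ^ 2 + 4 * c ^ 2 := by
    nlinarith [sq_nonneg (a - b - c), sq_nonneg (b - c)]
  have hc2sq : c ^ 2 ≤ M_x ^ 2 * ‖θ - θ'‖ ^ 2 := by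
    have := pow_le_pow_left₀ hc0 hlip 2
    simpa [mul_pow] using this
  -- V(y,θ',d') ≤ (1 - c₃/c₂) V(x,θ',d')
  have hq : c₃ / c₂ * V x θ' d' ≤ c₃ * ‖x - x_s θ' d'‖ ^ 2 := by
    rw [div_mul_eq_mul_div, div_le_iff₀ hc₂]
    nlinarith
  have hVy : V (F x θ' d') θ' d' ≤ (1 - c₃ / c₂) * V x θ' d' := by
    nlinarith
  -- 2c₂ a² ≤ (2c₂/c₁) V(y,θ',d')
  have hr : 2 * c₂ * a ^ 2 ≤ (2 * c₂ / c₁) * V (F x θ' d') θ' d' := by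
    have h := mul_le_mul_of_nonneg_left h0 (by positivity : (0:ℝ) ≤ 2 * c₂ / c₁)
    calc 2 * c₂ * a ^ 2 = (2 * c₂ / c₁) * (c₁ * a ^ 2) := by field_simp
      _ ≤ _ := h
  have hs : (2 * c₂ / c₁) * V (F x θ' d') θ' d' ≤ μ' * V x θ' d' := by
    rw [hμ']
    have h2c : 0 ≤ 2 * c₂ / c₁ := by positivity
    calc (2 * c₂ / c₁) * V (F x θ' d') θ' d'
        ≤ (2 * c₂ / c₁) * ((1 - c₃ / c₂) * V x θ' d') := by
          exact mul_le_mul_of_nonneg_left hVy h2c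
      _ = (2 * c₂ / c₁) * (1 - c₃ / c₂) * V x θ' d' := by ring
  have key : c₂ * ‖F x θ' d' - x_s θ d‖ ^ 2 ≤ 2 * c₂ * a ^ 2 + 4 * c₂ * b ^ 2 + 4 * c₂ * c ^ 2 := by
    nlinarith [mul_le_mul_of_nonneg_left hsq hc₂.le, mul_le_mul_of_nonneg_left hsum hc₂.le]
  have hcf : 4 * c₂ * c ^ 2 ≤ 4 * c₂ * (M_x ^ 2 * ‖θ - θ'‖ ^ 2) :=
    mul_le_mul_of_nonneg_left hc2sq (by positivity)
  calc V (F x θ' d') θ d ≤ c₂ * ‖F x θ' d' - x_s θ d‖ ^ 2 := h1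
    _ ≤ 2 * c₂ * a ^ 2 + 4 * c₂ * b ^ 2 + 4 * c₂ * c ^ 2 := key
    _ ≤ μ' * V x θ' d' + 4 * c₂ * M_x ^ 2 * ‖θ - θ'‖ ^ 2 + 4 * c₂ * b ^ 2 := by
        nlinarith [le_trans hr hs]
    _ = _ := by ring
end

section
/- Let E be a real inner product space, let D be a nonempty type, and let p, M, η, δ > 0. Let Ψ : E × D → ℝ be such that for every d ∈ D the map θ ↦ Ψ(θ, d) is M-Lipschitz. Let w, w', φ' ∈ E with ‖w − w'‖ ≤ η‖φ'‖, let u, u', v ∈ E with ‖u‖ = ‖u'‖ = ‖v‖ = 1, set θ := w + δ·u and θ' := w' + δ·u', let d, d' ∈ D, let e, e' ∈ ℝ, and define φ := (p/δ)·((Ψ(θ, d) + e) − (Ψ(θ', d') + e'))·v. Then ‖φ‖² ≤ (12η²p²M²/δ²)·‖φ'‖² + 48p²M² + (6p²/δ²)·(Ψ(θ, d) − Ψ(θ, d'))² + (3p²/δ²)·(e² + e'²). -/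
/-- Deterministic (pointwise) form of Lemma 7 of the paper: bound on the noisy
residual-feedback zeroth-order gradient estimate. -/
theorem stmt_8 {E : Type*} [NormedAddCommGroup E] [InnerProductSpace ℝ E]
    {D : Type*} [Nonempty D]
    (p M η δ : ℝ) (hp : 0 < p) (hM : 0 < M) (hη : 0 < η) (hδ : 0 < δ)
    (Ψ : E → D → ℝ) (hΨ : ∀ d, ∀ a b, |Ψ a d - Ψ b d| ≤ M * ‖a - b‖)
    (w w' φ' : E) (hww' : ‖w - w'‖ ≤ η * ‖φ'‖)
    (u u' v : E) (hu : ‖u‖ = 1) (hu' : ‖u'‖ = 1) (hv : ‖v‖ = 1)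
    (θ θ' : E) (hθ : θ = w + δ • u) (hθ' : θ' = w' + δ • u')
    (d d' : D) (e e' : ℝ)
    (φ : E) (hφ : φ = ((p / δ) * ((Ψ θ d + e) - (Ψ θ' d' + e'))) • v) :
    ‖φ‖ ^ 2 ≤ (12 * η ^ 2 * p ^ 2 * M ^ 2 / δ ^ 2) * ‖φ'‖ ^ 2 + 48 * p ^ 2 * M ^ 2
      + (6 * p ^ 2 / δ ^ 2) * (Ψ θ d - Ψ θ d') ^ 2
      + (3 * p ^ 2 / δ ^ 2) * (e ^ 2 + e' ^ 2) := by
  set a := Ψ θ d - Ψ θ d' with ha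
  set b := Ψ θ d' - Ψ θ' d' with hb
  set X := ‖φ'‖ with hX
  have hXnn : 0 ≤ X := norm_nonneg _
  have hT : ‖θ - θ'‖ ≤ η * X + 2 * δ := by
    have hsplit : θ - θ' = (w - w') + (δ • u - δ • u') := by rw [hθ, hθ']; abel
    rw [hsplit]
    calc ‖(w - w') + (δ • u - δ • u')‖ ≤ ‖w - w'‖ + ‖δ • u - δ • u'‖ := norm_add_le _ _
      _ ≤ ‖w - w'‖ + (‖δ • u‖ + ‖δ • u'‖) := by
          gcongr; exact norm_sub_le _ _
      _ = ‖w - w'‖ + (|δ| + |δ|) := by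
          rw [norm_smul, norm_smul, hu, hu', Real.norm_eq_abs]; ring
      _ ≤ η * X + 2 * δ := by rw [abs_of_pos hδ]; linarith [hww']
  have hbabs : |b| ≤ M * ‖θ - θ'‖ := hΨ d' θ θ'
  have hTnn : 0 ≤ ‖θ - θ'‖ := norm_nonneg _
  have hb2 : b ^ 2 ≤ 2 * M ^ 2 * η ^ 2 * X ^ 2 + 8 * M ^ 2 * δ ^ 2 := by
    have h1 : b ^ 2 ≤ (M * ‖θ - θ'‖) ^ 2 := by
      rw [← sq_abs b]
      exact pow_le_pow_left₀ (abs_nonneg _) hbabs 2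
    have h2 : (M * ‖θ - θ'‖) ^ 2 ≤ (M * (η * X + 2 * δ)) ^ 2 := by
      gcongr
    nlinarith [sq_nonneg (η * X - 2 * δ)]
  have hφ2 : ‖φ‖ ^ 2 = (p / δ) ^ 2 * (a + b + e - e') ^ 2 := by
    rw [hφ, norm_smul, hv, mul_one, Real.norm_eq_abs, sq_abs, mul_pow]
    congr 1
    rw [ha, hb]; ring
  have key : (a + b + e - e') ^ 2 ≤ 6 * a ^ 2 + 6 * b ^ 2 + 3 * e ^ 2 + 3 * e' ^ 2 := by
    nlinarith [sq_nonneg (a - b), sq_nonneg (e + e'), sq_nonneg (2 * a + 2 * b - e + e')]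
  have hpq : (0 : ℝ) ≤ (p / δ) ^ 2 := sq_nonneg _
  have step1 : (p / δ) ^ 2 * (a + b + e - e') ^ 2
      ≤ (p / δ) ^ 2 * (6 * a ^ 2 + (12 * M ^ 2 * η ^ 2 * X ^ 2 + 48 * M ^ 2 * δ ^ 2)
          + 3 * e ^ 2 + 3 * e' ^ 2) := by
    apply mul_le_mul_of_nonneg_left _ hpq
    linarith [key, hb2]
  rw [hφ2]
  refine step1.trans_eq ?_
  field_simp
  ring
end
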